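/- If all Λ(Tᵢ) > 0 and the covariate vectors X₁,…,Xₙ span ℝᵈ, then the Cox negative log-likelihood f(θ) = Σᵢ (Λ(Tᵢ)·exp(⟪θ, Xᵢ⟫) − δᵢ·⟪θ, Xᵢ⟫) is strictly convex on ℝᵈ. -/
import Mathlib


/-- If all `Λ(Tᵢ) > 0` and the covariates `X₁, …, Xₙ` span `ℝᵈ`, then the
Cox negative log-likelihood is strictly convex on `ℝᵈ`. -/
theorem cox_neg_log_likelihood_strictConvex
    (n d : ℕ) (Λ : Fin n → ℝ) (hΛ : ∀ i, 0 < Λ i)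
    (X : Fin n → Fin d → ℝ) (hspan : Submodule.span ℝ (Set.range X) = ⊤)
    (δ : Fin n → ℝ) (hδ : ∀ i, δ i = 0 ∨ δ i = 1) :
    StrictConvexOn ℝ Set.univ
      (fun θ : Fin d → ℝ =>
        ∑ i, (Λ i * Real.exp (∑ j, θ j * X i j) - δ i * ∑ j, θ j * X i j)) := by
  refine ⟨convex_univ, ?_⟩
  intro x _ y _ hxy a b ha hb hab
  -- the linear functional
  set L : Fin n → (Fin d → ℝ) → ℝ := fun i θ => ∑ j, θ j * X i j with hL
  have hLlin : ∀ i, L i (a • x + b • y) = a * L i x + b * L i y := by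
    intro i
    simp only [hL, Pi.add_apply, Pi.smul_apply, smul_eq_mul, add_mul,
      Finset.sum_add_distrib, Finset.mul_sum, mul_assoc]
  -- existence of i with L i x ≠ L i y
  have hex : ∃ i, L i x ≠ L i y := by
    by_contra h
    push_neg at h
    set w : Fin d → ℝ := x - y with hw
    have hφ : ∀ i, ∑ j, w j * X i j = 0 := by
      intro i
      have := h i
      simp only [hL] at this
      simp only [hw, Pi.sub_apply, sub_mul, Finset.sum_sub_distrib, this, sub_self]
    let φ : (Fin d → ℝ) →ₗ[ℝ] ℝ :=
      { toFun := fun v => ∑ j, w j * v j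
        map_add' := by
          intro u v
          simp [mul_add, Finset.sum_add_distrib]
        map_smul' := by
          intro c v
          simp [Finset.mul_sum, mul_left_comm] }
    have hker : Submodule.span ℝ (Set.range X) ≤ LinearMap.ker φ := by
      rw [Submodule.span_le]
      rintro _ ⟨i, rfl⟩
      exact hφ i
    rw [hspan, top_le_iff] at hker
    have hφw : φ w = 0 := by
      have : w ∈ LinearMap.ker φ := hker ▸ Submodule.mem_top
      exact this
    have : ∑ j, w j * w j = 0 := hφw
    have hw0 : w = 0 := by
      funext j
      have hj := (Finset.sum_eq_zero_iff_of_nonneg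
        (fun j _ => mul_self_nonneg (w j))).mp this j (Finset.mem_univ j)
      exact mul_self_eq_zero.mp hj
    exact hxy (sub_eq_zero.mp hw0)
  obtain ⟨i₀, hi₀⟩ := hex
  simp only
  have key : ∀ i, Λ i * Real.exp (L i (a • x + b • y)) - δ i * L i (a • x + b • y)
      ≤ a * (Λ i * Real.exp (L i x) - δ i * L i x)
        + b * (Λ i * Real.exp (L i y) - δ i * L i y) := by
    intro i
    rw [hLlin i]
    have hexp : Real.exp (a * L i x + b * L i y)
        ≤ a * Real.exp (L i x) + b * Real.exp (L i y) := by
      have := convexOn_exp.2 (Set.mem_univ (L i x)) (Set.mem_univ (L i y))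
        ha.le hb.le hab
      simpa [smul_eq_mul] using this
    nlinarith [(hΛ i).le, mul_le_mul_of_nonneg_left hexp (hΛ i).le]
  have key2 : Λ i₀ * Real.exp (L i₀ (a • x + b • y)) - δ i₀ * L i₀ (a • x + b • y)
      < a * (Λ i₀ * Real.exp (L i₀ x) - δ i₀ * L i₀ x)
        + b * (Λ i₀ * Real.exp (L i₀ y) - δ i₀ * L i₀ y) := by
    rw [hLlin i₀]
    have hexp : Real.exp (a * L i₀ x + b * L i₀ y)
        < a * Real.exp (L i₀ x) + b * Real.exp (L i₀ y) := by
      have := strictConvexOn_exp.2 (Set.mem_univ (L i₀ x)) (Set.mem_univ (L i₀ y))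
        hi₀ ha hb hab
      simpa [smul_eq_mul] using this
    nlinarith [hΛ i₀, mul_lt_mul_of_pos_left hexp (hΛ i₀)]
  calc ∑ i, (Λ i * Real.exp (L i (a • x + b • y)) - δ i * L i (a • x + b • y))
      < ∑ i, (a * (Λ i * Real.exp (L i x) - δ i * L i x)
          + b * (Λ i * Real.exp (L i y) - δ i * L i y)) := by
        refine Finset.sum_lt_sum (fun i _ => key i) ⟨i₀, Finset.mem_univ i₀, key2⟩
    _ = a • ∑ i, (Λ i * Real.exp (L i x) - δ i * L i x)
        + b • ∑ i, (Λ i * Real.exp (L i y) - δ i * L i y) := by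
        rw [Finset.sum_add_distrib, ← Finset.mul_sum, ← Finset.mul_sum]; simp [smul_eq_mul]
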